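/- arXiv:2304.00055 — 15 statements merged into one kernel-verified Lean document; each statement's English description precedes it below -/
import Mathlib

section
/- Let h : (X₂,R₂) → (X₁,R₁) be a surjective tournament map. Then R₂ is arc cyclic if and only if R₁ is arc cyclic and for every y ∈ X₁ the restriction of R₂ to h⁻¹(y) is arc cyclic. -/
open Set Filter Topology

/-- A tournament on X: an antisymmetric, total relation. -/
def IsTournament {X : Type*} (R : Set (X × X)) : Prop :=
  (R ∩ {p | (p.2, p.1) ∈ R} = {p | p.1 = p.2}) ∧ (R ∪ {p | (p.2, p.1) ∈ R} = Set.univ)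

/-- An arc of the tournament: a strict relation between distinct points. -/
def Arc {X : Type*} (R : Set (X × X)) (x y : X) : Prop :=
  (x, y) ∈ R ∧ x ≠ y

/-- A 3-cycle x → y → z → x. -/
def IsThreeCycle {X : Type*} (R : Set (X × X)) (x y z : X) : Prop :=
  Arc R x y ∧ Arc R y z ∧ Arc R z x

/-- Every arc lies in a 3-cycle. -/
def ArcCyclic {X : Type*} (R : Set (X × X)) : Prop :=
  ∀ x y : X, Arc R x y → ∃ z : X, IsThreeCycle R x y z

/-- The restriction of R to A is arc cyclic. -/
def ArcCyclicOn {X : Type*} (R : Set (X × X)) (A : Set X) : Prop :=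
  ∀ x ∈ A, ∀ y ∈ A, Arc R x y → ∃ z ∈ A, IsThreeCycle R x y z

/-- For a surjective tournament map, the total tournament is arc cyclic iff the base is
arc cyclic and each fiber restriction is arc cyclic. -/
theorem arcCyclic_iff_of_surjective_map {X₂ X₁ : Type*}
    (R₂ : Set (X₂ × X₂)) (R₁ : Set (X₁ × X₁))
    (hR₂ : IsTournament R₂) (hR₁ : IsTournament R₁)
    (h : X₂ → X₁) (hs : Function.Surjective h)
    (hmap : ∀ a b : X₂, (a, b) ∈ R₂ → (h a, h b) ∈ R₁) :
    ArcCyclic R₂ ↔ (ArcCyclic R₁ ∧ ∀ y : X₁, ArcCyclicOn R₂ (h ⁻¹' {y})) := by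
  -- antisymmetry and totality for both tournaments
  have anti₁ : ∀ x y : X₁, (x, y) ∈ R₁ → (y, x) ∈ R₁ → x = y := by
    intro x y hxy hyx
    have : (x, y) ∈ R₁ ∩ {p | (p.2, p.1) ∈ R₁} := ⟨hxy, hyx⟩
    rw [hR₁.1] at this; exact this
  have tot₂ : ∀ x y : X₂, (x, y) ∈ R₂ ∨ (y, x) ∈ R₂ := by
    intro x y
    have : (x, y) ∈ R₂ ∪ {p | (p.2, p.1) ∈ R₂} := hR₂.2 ▸ Set.mem_univ _
    exact this
  -- key: if h a ≠ h b and (h a, h b) ∈ R₁ then (a, b) ∈ R₂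
  have lift : ∀ a b : X₂, h a ≠ h b → (h a, h b) ∈ R₁ → (a, b) ∈ R₂ := by
    intro a b hne hab
    rcases tot₂ a b with hr | hr
    · exact hr
    · exact absurd (anti₁ _ _ hab (hmap _ _ hr)) hne
  constructor
  · intro hac
    constructor
    · rintro x y ⟨hxy, hne⟩
      obtain ⟨a, rfl⟩ := hs x
      obtain ⟨b, rfl⟩ := hs y
      have hab : Arc R₂ a b := ⟨lift a b hne hxy, fun e => hne (by rw [e])⟩
      obtain ⟨c, ⟨_, _⟩, ⟨hbc, _⟩, ⟨hca, _⟩⟩ := hac a b hab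
      have hbc' : (h b, h c) ∈ R₁ := hmap _ _ hbc
      have hca' : (h c, h a) ∈ R₁ := hmap _ _ hca
      have h1 : h b ≠ h c := fun e => hne (anti₁ _ _ hxy (e ▸ hca'))
      have h2 : h c ≠ h a := fun e => hne (anti₁ _ _ hxy (e ▸ hbc'))
      exact ⟨h c, ⟨hxy, hne⟩, ⟨hbc', h1⟩, ⟨hca', h2⟩⟩
    · intro y a ha b hb hab
      obtain ⟨c, hc⟩ := hac a b hab
      refine ⟨c, ?_, hc⟩
      simp only [Set.mem_preimage, Set.mem_singleton_iff] at ha hb ⊢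
      by_contra hcy
      have h1 : (y, h c) ∈ R₁ := hb ▸ hmap _ _ hc.2.1.1
      have h2 : (h c, y) ∈ R₁ := ha ▸ hmap _ _ hc.2.2.1
      exact hcy (anti₁ _ _ h2 h1)
  · rintro ⟨hac₁, hfib⟩ a b hab
    by_cases hne : h a = h b
    · have ha : a ∈ h ⁻¹' {h a} := rfl
      have hb : b ∈ h ⁻¹' {h a} := by simp [hne.symm]
      obtain ⟨c, _, hc⟩ := hfib (h a) a ha b hb hab
      exact ⟨c, hc⟩
    · have harc : Arc R₁ (h a) (h b) := ⟨hmap _ _ hab.1, hne⟩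
      obtain ⟨w, ⟨_, _⟩, ⟨hbw, hbw'⟩, ⟨hwa, hwa'⟩⟩ := hac₁ _ _ harc
      obtain ⟨c, rfl⟩ := hs w
      refine ⟨c, hab, ⟨lift b c hbw' hbw, fun e => hbw' (by rw [e])⟩,
        ⟨lift c a hwa' hwa, fun e => hwa' (by rw [e])⟩⟩
end

section
/- If R is a closed tournament on a connected topological space X, then R is transitive, and hence R is a linear order on X. -/
open Set Filter Topology

/-- A closed tournament on a connected space is transitive, hence a linear order. -/
theorem closed_tournament_on_connected_is_linearOrder {X : Type*} [TopologicalSpace X]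
    [T2Space X] [ConnectedSpace X]
    (R : Set (X × X)) (hR : IsTournament R) (hclosed : IsClosed R) :
    (∀ x y z : X, (x, y) ∈ R → (y, z) ∈ R → (x, z) ∈ R) ∧
    IsLinearOrder X (fun x y => (x, y) ∈ R) := by
  obtain ⟨hanti, htot⟩ := hR
  have htotal : ∀ a b : X, (a, b) ∈ R ∨ (b, a) ∈ R := by
    intro a b
    have h : ((a, b) : X × X) ∈ R ∪ {p | (p.2, p.1) ∈ R} := htot ▸ mem_univ _
    exact h
  have hrefl : ∀ a : X, (a, a) ∈ R := by
    intro a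
    rcases htotal a a with h | h <;> exact h
  have hantisymm : ∀ a b : X, (a, b) ∈ R → (b, a) ∈ R → a = b := by
    intro a b h1 h2
    have h : ((a, b) : X × X) ∈ R ∩ {p | (p.2, p.1) ∈ R} := ⟨h1, h2⟩
    rw [hanti] at h
    exact h
  have htrans : ∀ x y z : X, (x, y) ∈ R → (y, z) ∈ R → (x, z) ∈ R := by
    intro x y z hxy hyz
    by_contra hxz
    have hzx : (z, x) ∈ R := (htotal x z).resolve_left hxz
    have hxney : x ≠ y := by rintro rfl; exact hxz hyz
    have hyx : (y, x) ∉ R := fun h => hxney (hantisymm x y hxy h)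
    set D : Set X := {w | (y, w) ∈ R ∧ (w, x) ∈ R} with hD
    have hclosedD : IsClosed D := by
      have c1 : IsClosed {w : X | (y, w) ∈ R} :=
        hclosed.preimage (continuous_const.prodMk continuous_id)
      have c2 : IsClosed {w : X | (w, x) ∈ R} :=
        hclosed.preimage (continuous_id.prodMk continuous_const)
      exact c1.inter c2
    have hopenD : IsOpen D := by
      have heq : D = {w : X | (w, y) ∈ R}ᶜ ∩ {w : X | (x, w) ∈ R}ᶜ := by
        ext w
        simp only [hD, mem_setOf_eq, mem_inter_iff, mem_compl_iff]
        constructor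
        · rintro ⟨h1, h2⟩
          refine ⟨fun hwy => ?_, fun hxw => ?_⟩
          · have he : y = w := hantisymm y w h1 hwy
            subst he; exact hyx h2
          · have he : w = x := hantisymm w x h2 hxw
            subst he; exact hyx h1
        · rintro ⟨h1, h2⟩
          exact ⟨(htotal y w).resolve_right h1, (htotal w x).resolve_right h2⟩
      rw [heq]
      have c1 : IsClosed {w : X | (w, y) ∈ R} :=
        hclosed.preimage (continuous_id.prodMk continuous_const)
      have c2 : IsClosed {w : X | (x, w) ∈ R} :=
        hclosed.preimage (continuous_const.prodMk continuous_id)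
      exact c1.isOpen_compl.inter c2.isOpen_compl
    have hzD : z ∈ D := ⟨hyz, hzx⟩
    have hxD : x ∉ D := fun h => hyx h.1
    rcases isClopen_iff.mp ⟨hclosedD, hopenD⟩ with h | h
    · rw [h] at hzD; exact hzD
    · rw [h] at hxD; exact hxD (mem_univ x)
  refine ⟨htrans, ?_⟩
  exact { refl := hrefl, trans := htrans, antisymm := hantisymm, total := htotal }
end

section
/- If R is a closed transitive tournament (i.e. a closed linear order) on a compact Hausdorff space X, then the topology on X equals the order topology induced by R. -/
/-- If a linear order is closed (as a transitive topological tournament) on a compact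
Hausdorff space, then the topology is the order topology. -/
theorem closed_linearOrder_on_compact_is_orderTopology {X : Type*} [LinearOrder X]
    [TopologicalSpace X] [CompactSpace X] [T2Space X]
    (hclosed : IsClosed {p : X × X | p.1 ≤ p.2}) :
    OrderTopology X := by
  haveI : OrderClosedTopology X := ⟨hclosed⟩
  have hle : ‹TopologicalSpace X› ≤ Preorder.topology X := by
    apply le_generateFrom
    rintro s ⟨a, rfl | rfl⟩
    · exact isOpen_Ioi
    · exact isOpen_Iio
  have hT2 : @T2Space X (Preorder.topology X) :=
    @OrderClosedTopology.to_t2Space X (Preorder.topology X) _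
      (@OrderTopology.to_orderClosedTopology X (Preorder.topology X) _ (@OrderTopology.mk X (Preorder.topology X) _ rfl))
  have hc : @Continuous X X _ (Preorder.topology X) id := continuous_id_iff_le.2 hle
  have hcm : @IsClosedMap X X _ (Preorder.topology X) id :=
    @Continuous.isClosedMap X X _ (Preorder.topology X) _ hT2 id hc
  have hge : Preorder.topology X ≤ ‹TopologicalSpace X› := by
    rw [TopologicalSpace.le_def]
    intro s hs
    have h1 : IsClosed sᶜ := isClosed_compl_iff.2 hs
    have h2 : @IsClosed X (Preorder.topology X) (id '' sᶜ) := hcm _ h1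
    rw [Set.image_id] at h2
    exact (@isClosed_compl_iff X (Preorder.topology X) s).1 h2
  exact ⟨le_antisymm hle hge⟩
end

section
/- A group G admits a game subset (a set A with A ∩ A⁻¹ = {e} and A ∪ A⁻¹ = G) if and only if G has no element of order two. -/
open Set

/-- A group admits a game subset iff it has no element of order two. -/
theorem exists_gameSubset_iff_no_order_two {G : Type*} [Group G] :
    (∃ A : Set G, A ∩ A⁻¹ = {1} ∧ A ∪ A⁻¹ = Set.univ) ↔
      ¬ ∃ x : G, x ≠ 1 ∧ x * x = 1 := by
  constructor
  · rintro ⟨A, hInt, hUn⟩ ⟨x, hx, hx2⟩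
    have hinv : x⁻¹ = x := by
      rw [eq_comm, eq_inv_iff_mul_eq_one, hx2]
    have hmem : x ∈ A ∪ A⁻¹ := hUn ▸ mem_univ x
    have hA : x ∈ A ∩ A⁻¹ := by
      rcases hmem with h | h
      · exact ⟨h, by rw [Set.mem_inv, hinv]; exact h⟩
      · exact ⟨by rw [Set.mem_inv, hinv] at h; exact h, h⟩
    rw [hInt] at hA
    exact hx hA
  · intro h
    have hni : ∀ x : G, x ≠ 1 → x⁻¹ ≠ x := by
      intro x hx he
      exact h ⟨x, hx, by nth_rewrite 2 [← he]; exact mul_inv_cancel x⟩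
    refine ⟨{x | x = 1 ∨ WellOrderingRel x x⁻¹}, ?_, ?_⟩
    · ext x
      simp only [Set.mem_inter_iff, Set.mem_inv, Set.mem_setOf_eq, Set.mem_singleton_iff,
        inv_inv, inv_eq_one]
      constructor
      · rintro ⟨h1 | h1, h2 | h2⟩
        · exact h1
        · exact h1
        · exact h2
        · exact absurd h2 (asymm h1)
      · rintro rfl; exact ⟨Or.inl rfl, Or.inl rfl⟩
    · ext x
      simp only [Set.mem_union, Set.mem_inv, Set.mem_setOf_eq, mem_univ, iff_true, inv_inv,
        inv_eq_one]
      by_cases hx : x = 1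
      · exact Or.inl (Or.inl hx)
      · rcases trichotomous_of WellOrderingRel x x⁻¹ with h1 | h1 | h1
        · exact Or.inl (Or.inr h1)
        · exact absurd h1.symm (hni x hx)
        · exact Or.inr (Or.inr h1)
end

section
/- Let G be a compact topological group and x ∈ G. Then ω(x) = ⋂_{n∈ℕ} closure{x^i : i ≥ n} is a nonempty closed subgroup of G. -/
/-!
A point `a` lies in `ω(x)` iff every neighbourhood of `a` contains arbitrarily late powers of `x`.
If `x ^ i ≈ a` and `x ^ j ≈ b` then `x ^ (i + j) ≈ a * b`; if moreover `j` is much larger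
than `i` and `x ^ j ≈ a`, then `x ^ (j - 2 * i) = x ^ j * (x ^ i)⁻¹ * (x ^ i)⁻¹ ≈ a⁻¹`.
Nonemptiness is the finite intersection property of the nested closed tails in a compact space.
-/

open Filter Topology

section Monoid

variable {M : Type*} [Monoid M] [TopologicalSpace M]

def omegaPowers (x : M) : Set M :=
  ⋂ n : ℕ, closure {y : M | ∃ i : ℕ, n ≤ i ∧ y = x ^ i}

theorem isClosed_omegaPowers (x : M) : IsClosed (omegaPowers x) :=
  isClosed_iInter fun _ => isClosed_closure

theorem mem_omegaPowers_iff {x a : M} :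
    a ∈ omegaPowers x ↔ ∀ U ∈ 𝓝 a, ∀ n : ℕ, ∃ i, n ≤ i ∧ x ^ i ∈ U := by
  simp only [omegaPowers, Set.mem_iInter, mem_closure_iff_nhds]
  constructor
  · intro h U hU n
    obtain ⟨_, hyU, i, hi, rfl⟩ := h n U hU
    exact ⟨i, hi, hyU⟩
  · intro h n U hU
    obtain ⟨i, hi, hxi⟩ := h U hU n
    exact ⟨x ^ i, hxi, i, hi, rfl⟩

theorem omegaPowers_nonempty [CompactSpace M] (x : M) : (omegaPowers x).Nonempty := by
  refine IsCompact.nonempty_iInter_of_sequence_nonempty_isCompact_isClosed _ ?_ ?_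
    isClosed_closure.isCompact fun _ => isClosed_closure
  · intro n
    refine closure_mono ?_
    rintro _ ⟨i, hi, rfl⟩
    exact ⟨i, n.le_succ.trans hi, rfl⟩
  · exact fun n => ⟨x ^ n, subset_closure ⟨n, le_rfl, rfl⟩⟩

theorem mul_mem_omegaPowers [ContinuousMul M] {x a b : M} (ha : a ∈ omegaPowers x)
    (hb : b ∈ omegaPowers x) : a * b ∈ omegaPowers x := by
  rw [mem_omegaPowers_iff] at ha hb ⊢
  intro W hW n
  obtain ⟨U, hU, V, hV, hUV⟩ := mem_nhds_prod_iff.1 (tendsto_mul hW)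
  obtain ⟨i, hi, hxi⟩ := ha U hU n
  obtain ⟨j, -, hxj⟩ := hb V hV 0
  refine ⟨i + j, hi.trans (Nat.le_add_right i j), ?_⟩
  simpa [pow_add] using hUV (Set.mk_mem_prod hxi hxj)

end Monoid

section Group

variable {G : Type*} [Group G] [TopologicalSpace G] [IsTopologicalGroup G]

theorem inv_mem_omegaPowers {x a : G} (ha : a ∈ omegaPowers x) : a⁻¹ ∈ omegaPowers x := by
  rw [mem_omegaPowers_iff] at ha ⊢
  intro W hW n
  let f : G × G → G := fun p => p.2 * p.1⁻¹ * p.1⁻¹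
  have hfa : f (a, a) = a⁻¹ := by simp [f]
  have hf : Tendsto f (𝓝 (a, a)) (𝓝 a⁻¹) := hfa ▸ (by fun_prop : Continuous f).tendsto (a, a)
  obtain ⟨U, hU, V, hV, hUV⟩ := mem_nhds_prod_iff.1 (hf hW)
  obtain ⟨i, -, hxi⟩ := ha U hU 0
  obtain ⟨j, hj, hxj⟩ := ha V hV (2 * i + n)
  have hpow : f (x ^ i, x ^ j) = x ^ (j - 2 * i) := by
    simp only [f, ← zpow_natCast, ← zpow_neg, ← zpow_add]
    congr 1
    omega
  exact ⟨j - 2 * i, by omega, hpow ▸ hUV (Set.mk_mem_prod hxi hxj)⟩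

variable [CompactSpace G]

def omegaPowersSubgroup (x : G) : Subgroup G where
  carrier := omegaPowers x
  mul_mem' := mul_mem_omegaPowers
  inv_mem' := inv_mem_omegaPowers
  one_mem' := by
    obtain ⟨a, ha⟩ := omegaPowers_nonempty x
    simpa using mul_mem_omegaPowers ha (inv_mem_omegaPowers ha)

end Group

theorem omega_limit_powers_subgroup_general {G : Type*} [Group G] [TopologicalSpace G]
    [IsTopologicalGroup G] [CompactSpace G] (x : G) :
    (⋂ n : ℕ, closure {y : G | ∃ i : ℕ, n ≤ i ∧ y = x ^ i}).Nonempty ∧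
    IsClosed (⋂ n : ℕ, closure {y : G | ∃ i : ℕ, n ≤ i ∧ y = x ^ i}) ∧
    ∃ H : Subgroup G, (H : Set G) = ⋂ n : ℕ, closure {y : G | ∃ i : ℕ, n ≤ i ∧ y = x ^ i} :=
  ⟨omegaPowers_nonempty x, isClosed_omegaPowers x, omegaPowersSubgroup x, rfl⟩

/-- In a compact topological group, the omega limit set of the powers of a point is a
nonempty closed subgroup. -/
theorem omega_limit_powers_subgroup {G : Type*} [Group G] [TopologicalSpace G]
    [IsTopologicalGroup G] [CompactSpace G] [T2Space G] (x : G) :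
    (⋂ n : ℕ, closure {y : G | ∃ i : ℕ, n ≤ i ∧ y = x ^ i}).Nonempty ∧
    IsClosed (⋂ n : ℕ, closure {y : G | ∃ i : ℕ, n ≤ i ∧ y = x ^ i}) ∧
    ∃ H : Subgroup G, (H : Set G) = ⋂ n : ℕ, closure {y : G | ∃ i : ℕ, n ≤ i ∧ y = x ^ i} :=
  omega_limit_powers_subgroup_general x
end

section
/- If A is a closed game subset of a compact topological group G, then the associated tournament Â = {(x,y) : x⁻¹y ∈ A} is arc cyclic: for every arc (x,y) with x⁻¹y ∈ A \ {e}, there exists z such that x → y → z → x. -/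
/-!
If the arc `x → y` lay on no 3-cycle, then, writing `a = x⁻¹y`, for every `w ∈ A` the vertex
`z = yw` would satisfy `y → z` and hence force `aw ∈ A`; that is, `aA ⊆ A`. All powers of `a`
then lie in the closed set `A`, and in a compact group `a⁻¹` is a limit of powers of `a`,
so `a ∈ A ∩ A⁻¹ = {1}`, i.e. `x = y`.
-/

open Set

theorem one_mem_of_inter_inv_eq_one {G : Type*} [One G] [InvolutiveInv G] {A : Set G}
    (hA : A ∩ A⁻¹ = {1}) : (1 : G) ∈ A :=
  (hA.symm ▸ rfl : (1 : G) ∈ A ∩ A⁻¹).1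

section CompactGroup

variable {G : Type*} [Group G] [TopologicalSpace G] [IsTopologicalGroup G] [CompactSpace G]

theorem IsClosed.inv_mem_of_forall_pow_mem {A : Set G} (hA : IsClosed A) {a : G}
    (h : ∀ n : ℕ, a ^ n ∈ A) : a⁻¹ ∈ A :=
  hA.closure_subset_iff.2 (range_subset_iff.2 h) <|
    closure_range_zpow_eq_pow a ▸ subset_closure ⟨-1, zpow_neg_one a⟩

theorem IsClosed.eq_one_of_forall_mul_mem {A : Set G} (hA : IsClosed A) (hA₁ : A ∩ A⁻¹ = {1})
    {a : G} (ha : ∀ w ∈ A, a * w ∈ A) : a = 1 := by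
  have hpow : ∀ n : ℕ, a ^ n ∈ A := by
    intro n
    induction n with
    | zero => simpa using one_mem_of_inter_inv_eq_one hA₁
    | succ n ih => simpa [pow_succ'] using ha _ ih
  have ha' : a ∈ A ∩ A⁻¹ := ⟨by simpa using hpow 1, hA.inv_mem_of_forall_pow_mem hpow⟩
  simpa [hA₁] using ha'

end CompactGroup

theorem closed_gameSubset_arcCyclic_general {G : Type*} [Group G] [TopologicalSpace G]
    [IsTopologicalGroup G] [CompactSpace G]
    (A : Set G) (hclosed : IsClosed A)
    (hA : A ∩ A⁻¹ = {1}) (hA' : A ∪ A⁻¹ = Set.univ) :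
    ∀ x y : G, x⁻¹ * y ∈ A → x ≠ y →
      ∃ z : G, (y⁻¹ * z ∈ A ∧ y ≠ z) ∧ (z⁻¹ * x ∈ A ∧ z ≠ x) := by
  intro x y hxy hne
  by_contra! hcycle
  have hsub : ∀ w ∈ A, x⁻¹ * y * w ∈ A := by
    intro w hw
    by_cases hw₁ : w = 1
    · simpa [hw₁] using hxy
    have hyz : y⁻¹ * (y * w) ∈ A ∧ y ≠ y * w := by simpa using And.intro hw hw₁
    have hzx : (y * w)⁻¹ * x = (x⁻¹ * y * w)⁻¹ := by group
    rcases (hA'.symm ▸ mem_univ _ : x⁻¹ * y * w ∈ A ∪ A⁻¹) with hmem | hinv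
    · exact hmem
    · have hz : y * w = x := hcycle _ hyz (hzx ▸ hinv)
      simpa [mul_assoc, hz] using one_mem_of_inter_inv_eq_one hA
  exact hne (by simpa [inv_mul_eq_one] using hclosed.eq_one_of_forall_mul_mem hA hsub)

/-- The tournament of a closed game subset of a compact topological group is arc cyclic. -/
theorem closed_gameSubset_arcCyclic {G : Type*} [Group G] [TopologicalSpace G]
    [IsTopologicalGroup G] [CompactSpace G] [T2Space G]
    (A : Set G) (hclosed : IsClosed A)
    (hA : A ∩ A⁻¹ = {1}) (hA' : A ∪ A⁻¹ = Set.univ) :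
    ∀ x y : G, x⁻¹ * y ∈ A → x ≠ y →
      ∃ z : G, (y⁻¹ * z ∈ A ∧ y ≠ z) ∧ (z⁻¹ * x ∈ A ∧ z ≠ x) :=
  closed_gameSubset_arcCyclic_general A hclosed hA hA'
end

section
/- If A is a closed game subset of an infinite compact topological group G, then every point of G is balanced for the tournament Â: for every x, x lies in the closure of Â°(x) = xA \ {x} and in the closure of (Â°)⁻¹(x). -/
/-!
Let `B` be `A` or `A⁻¹`; both are game subsets. If `1` were not in the closure of `B \ {1}`, some
neighbourhood `U` of `1` would meet `B` only in `1`, hence lie in `B⁻¹`; then `U ∩ U⁻¹ ⊆ B ∩ B⁻¹ = {1}`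
would make `G` discrete, and a compact discrete group is finite. Left translation by `x` carries
`B \ {1}` onto the outset (for `B = A`) or the inset (for `B = A⁻¹`) of `x`.
-/

section GameSubset

open Set Filter Topology

variable {G : Type*} [Group G]

def IsGameSubset (A : Set G) : Prop := A ∩ A⁻¹ = {1} ∧ A ∪ A⁻¹ = univ

namespace IsGameSubset

variable {A : Set G}

lemma inv (hA : IsGameSubset A) : IsGameSubset A⁻¹ := by
  rw [IsGameSubset, inv_inv, inter_comm, union_comm]
  exact hA

lemma one_mem_inv (hA : IsGameSubset A) : (1 : G) ∈ A⁻¹ :=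
  (hA.1.symm.subset rfl).2

variable [TopologicalSpace G] [IsTopologicalGroup G]

lemma isOpen_singleton_one_of_one_notMem_closure (hA : IsGameSubset A)
    (h : (1 : G) ∉ closure (A \ {1})) : IsOpen ({1} : Set G) := by
  obtain ⟨U, hU, hUA⟩ : ∃ U ∈ 𝓝 (1 : G), U ∩ (A \ {1}) = ∅ := by
    simpa [mem_closure_iff_nhds, not_nonempty_iff_eq_empty] using h
  have hU_inv : U ⊆ A⁻¹ := by
    intro y hy
    by_cases hy1 : y = 1
    · exact hy1 ▸ hA.one_mem_inv
    refine (hA.2.symm ▸ mem_univ y : y ∈ A ∪ A⁻¹).resolve_left fun hyA => ?_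
    exact hUA.subset ⟨hy, hyA, hy1⟩
  have hsymm : U ∩ U⁻¹ ⊆ {1} := hA.1 ▸ fun y hy => ⟨by simpa using hU_inv hy.2, hU_inv hy.1⟩
  have : {1} ∈ 𝓝 (1 : G) := mem_of_superset (inter_mem hU (inv_mem_nhds_one G hU)) hsymm
  simpa [isOpen_iff_mem_nhds] using this

lemma one_mem_closure_diff [CompactSpace G] [Infinite G] (hA : IsGameSubset A) :
    (1 : G) ∈ closure (A \ {1}) := by
  by_contra h
  have := discreteTopology_of_isOpen_singleton_one
    (hA.isOpen_singleton_one_of_one_notMem_closure h)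
  have := finite_of_compact_of_discrete (X := G)
  exact not_finite G

end IsGameSubset

section Translation

-- Scoped here only: under `Pointwise`, `A⁻¹` on sets elaborates through a different (defeq)
-- instance than the one in the statement of the theorem.
open scoped Pointwise

lemma setOf_inv_mul_mem_and_ne_eq_smul (A : Set G) (x : G) :
    {y : G | x⁻¹ * y ∈ A ∧ x ≠ y} = x • (A \ {1}) := by
  ext y
  simp [mem_smul_set_iff_inv_smul_mem, inv_mul_eq_one]

lemma setOf_inv_mul_mem_and_ne_eq_smul_inv (A : Set G) (x : G) :
    {y : G | y⁻¹ * x ∈ A ∧ y ≠ x} = x • (A⁻¹ \ {1}) := by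
  ext y
  simp [mem_smul_set_iff_inv_smul_mem, inv_mul_eq_one, eq_comm]

lemma mem_closure_smul_self_iff [TopologicalSpace G] [IsTopologicalGroup G] (x : G) (s : Set G) :
    x ∈ closure (x • s) ↔ (1 : G) ∈ closure s := by
  rw [closure_smul, mem_smul_set_iff_inv_smul_mem, smul_eq_mul, inv_mul_cancel]

end Translation

end GameSubset

theorem closed_gameSubset_balanced_general {G : Type*} [Group G] [TopologicalSpace G]
    [IsTopologicalGroup G] [CompactSpace G] [Infinite G]
    (A : Set G)
    (hA : A ∩ A⁻¹ = {1}) (hA' : A ∪ A⁻¹ = Set.univ) :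
    ∀ x : G, x ∈ closure {y : G | x⁻¹ * y ∈ A ∧ x ≠ y} ∧
      x ∈ closure {y : G | y⁻¹ * x ∈ A ∧ y ≠ x} := by
  have hgame : IsGameSubset A := ⟨hA, hA'⟩
  intro x
  rw [setOf_inv_mul_mem_and_ne_eq_smul, setOf_inv_mul_mem_and_ne_eq_smul_inv,
    mem_closure_smul_self_iff, mem_closure_smul_self_iff]
  exact ⟨hgame.one_mem_closure_diff, hgame.inv.one_mem_closure_diff⟩

/-- The tournament of a closed game subset of an infinite compact topological group is
balanced: every point is in the closure of its outset and of its inset. -/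
theorem closed_gameSubset_balanced {G : Type*} [Group G] [TopologicalSpace G]
    [IsTopologicalGroup G] [CompactSpace G] [T2Space G] [Infinite G]
    (A : Set G) (hclosed : IsClosed A)
    (hA : A ∩ A⁻¹ = {1}) (hA' : A ∪ A⁻¹ = Set.univ) :
    ∀ x : G, x ∈ closure {y : G | x⁻¹ * y ∈ A ∧ x ≠ y} ∧
      x ∈ closure {y : G | y⁻¹ * x ∈ A ∧ y ≠ x} :=
  closed_gameSubset_balanced_general A hA hA'
end

section
/- Let w be a homeomorphism of a nonempty compact metrizable totally disconnected space X with no isolated points (a Cantor set) satisfying w ∘ w = id and w(x) ≠ x for all x. Then there exists a clopen set A ⊆ X such that X is the disjoint union of A and w(A). -/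
open Set

/-- A free involution on a Cantor set admits a clopen fundamental domain. -/
theorem free_involution_clopen_half {X : Type*} [TopologicalSpace X] [CompactSpace X]
    [TopologicalSpace.MetrizableSpace X] [TotallyDisconnectedSpace X] [Nonempty X]
    (hperf : ∀ x : X, ¬ IsOpen ({x} : Set X))
    (w : X ≃ₜ X) (hinv : ∀ x : X, w (w x) = x) (hfree : ∀ x : X, w x ≠ x) :
    ∃ A : Set X, IsClopen A ∧ Disjoint A (w '' A) ∧ A ∪ w '' A = Set.univ := by
  classical
  letI := TopologicalSpace.metrizableSpaceMetric X
  -- membership in images of the involution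
  have hmem : ∀ (S : Set X) (x : X), x ∈ w '' S ↔ w x ∈ S := by
    intro S x
    constructor
    · rintro ⟨y, hy, rfl⟩; rwa [hinv]
    · intro h; exact ⟨w x, h, hinv x⟩
  -- clopen neighborhoods disjoint from their image
  have hU : ∀ x : X, ∃ U : Set X, IsClopen U ∧ x ∈ U ∧ Disjoint U (w '' U) := by
    intro x
    obtain ⟨O1, O2, h1, h2, hx1, hx2, hd⟩ := t2_separation (hfree x).symm
    have hopen : IsOpen (O1 ∩ w ⁻¹' O2) := h1.inter (h2.preimage w.continuous)
    obtain ⟨U, hUc, hxU, hUsub⟩ := compact_exists_isClopen_in_isOpen hopen ⟨hx1, hx2⟩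
    refine ⟨U, hUc, hxU, ?_⟩
    refine Set.disjoint_left.2 fun y hy hy' => ?_
    obtain ⟨z, hz, rfl⟩ := hy'
    exact Set.disjoint_left.1 hd (hUsub hy).1 (hUsub hz).2
  choose U hUc hxU hUd using hU
  obtain ⟨t, ht⟩ := isCompact_univ.elim_finite_subcover U (fun x => (hUc x).2)
    (fun x _ => mem_iUnion.2 ⟨x, hxU x⟩)
  set n := t.card with hn
  let e : Fin n → X := fun i => ((t.equivFin).symm i : X)
  let V : Fin n → Set X := fun i => U (e i)
  have hVc : ∀ i, IsClopen (V i) := fun i => hUc _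
  have hVd : ∀ i, Disjoint (V i) (w '' V i) := fun i => hUd _
  -- every point is in some V i
  have hcov : ∀ x : X, ∃ i, x ∈ V i := by
    intro x
    obtain ⟨y, hy⟩ := mem_iUnion.1 (ht (mem_univ x))
    obtain ⟨hyt, hxy⟩ := mem_iUnion.1 hy
    refine ⟨t.equivFin ⟨y, hyt⟩, ?_⟩
    simpa [V, e] using hxy
  -- the greedy fundamental domain
  let W : Fin n → Set X := fun i => V i \ ⋃ j, ⋃ _ : j < i, (V j ∪ w '' V j)
  have hWc : ∀ i, IsClopen (W i) := by
    intro i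
    refine (hVc i).diff (isClopen_iUnion_of_finite fun j => isClopen_iUnion_of_finite
      fun _ => ((hVc j).union (by rw [show ⇑w '' V j = ⇑w.symm ⁻¹' V j from Equiv.image_eq_preimage_symm _ _]; exact (hVc j).preimage w.symm.continuous)))
  refine ⟨⋃ i, W i, isClopen_iUnion_of_finite hWc, ?_, ?_⟩
  · refine Set.disjoint_left.2 fun x hx hx' => ?_
    obtain ⟨i, hxi⟩ := mem_iUnion.1 hx
    have hwx : w x ∈ ⋃ i, W i := by
      rw [hmem] at hx'; exact hx'
    obtain ⟨j, hxj⟩ := mem_iUnion.1 hwx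
    rcases lt_trichotomy i j with h | h | h
    · -- w x ∈ W j, with i < j, but w x ∈ w '' V i
      exact hxj.2 (mem_iUnion.2 ⟨i, mem_iUnion.2 ⟨h, Or.inr ((hmem _ _).2 (by rw [hinv]; exact hxi.1))⟩⟩)
    · subst h
      exact Set.disjoint_left.1 (hVd i) hxi.1 ((hmem _ _).2 hxj.1)
    · exact hxi.2 (mem_iUnion.2 ⟨j, mem_iUnion.2 ⟨h, Or.inr ((hmem _ _).2 hxj.1)⟩⟩)
  · refine Set.eq_univ_of_forall fun x => ?_
    obtain ⟨i0, hi0⟩ := hcov x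
    obtain ⟨i, hi, hmin⟩ := Finset.exists_min_image
      (Finset.univ.filter fun i => x ∈ V i ∪ w '' V i) id
      ⟨i0, Finset.mem_filter.2 ⟨Finset.mem_univ _, Or.inl hi0⟩⟩
    have hi' : x ∈ V i ∪ w '' V i := (Finset.mem_filter.1 hi).2
    have hminlt : ∀ j, j < i → x ∉ V j ∪ w '' V j := by
      intro j hj hcontra
      exact absurd (hmin j (Finset.mem_filter.2 ⟨Finset.mem_univ _, hcontra⟩)) (not_le.2 hj)
    rcases hi' with h | h
    · refine Or.inl (mem_iUnion.2 ⟨i, h, ?_⟩)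
      intro hx
      obtain ⟨j, hj⟩ := mem_iUnion.1 hx
      obtain ⟨hji, hxj⟩ := mem_iUnion.1 hj
      exact hminlt j hji hxj
    · refine Or.inr ((hmem _ _).2 (mem_iUnion.2 ⟨i, (hmem _ _).1 h, ?_⟩))
      intro hx
      obtain ⟨j, hj⟩ := mem_iUnion.1 hx
      obtain ⟨hji, hxj⟩ := mem_iUnion.1 hj
      refine hminlt j hji ?_
      rcases hxj with h' | h'
      · exact Or.inr ((hmem _ _).2 h')
      · exact Or.inl (by rw [hmem, hinv] at h'; exact h')
end

section
/- Let G be a topological group whose underlying space is a Cantor set. Then G admits a closed game subset A (i.e. a closed set with A ∩ A⁻¹ = {e} and A ∪ A⁻¹ = G) if and only if G has no element of order 2. -/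
/-!
An element `x ≠ 1` with `x = x⁻¹` lies in `A ∩ A⁻¹` for every `A` with `A ∪ A⁻¹ = G`.
Conversely, it suffices to find an open `U` with `U ∩ U⁻¹ = ∅` and `U ∪ U⁻¹ = G \ {1}`; then
`A = G \ U` works. Since `1` has a countable basis of clopen neighbourhoods, `G \ {1}` is a
disjoint union of countably many symmetric clopen annuli. On each (compact) annulus inversion
is fixed-point free, so it is covered by finitely many clopen sets `W` with `W ∩ W⁻¹ = ∅`, which
merge greedily into a clopen half of the annulus; `U` is the union of these halves.
-/

open Set Function Topology

section disjointed

variable {ι X : Type*} [Preorder ι] [LocallyFiniteOrderBot ι]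

lemma disjointed_inv [InvolutiveInv X] {f : ι → Set X} (hf : ∀ i, (f i)⁻¹ = f i) (i : ι) :
    (disjointed f i)⁻¹ = disjointed f i := by
  simp only [disjointed_eq_inf_compl, inf_eq_inter, iInf_eq_iInter, Set.inter_inv,
    Set.iInter_inv, Set.compl_inv, hf]

lemma isClopen_disjointed [TopologicalSpace X] {f : ι → Set X} (hf : ∀ i, IsClopen (f i))
    (i : ι) : IsClopen (disjointed f i) := by
  rw [disjointed_eq_inf_compl]
  exact (hf i).inter ((finite_Iio i).isClopen_biInter fun j _ => (hf j).compl)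

end disjointed

section InvolutiveInv

variable {X : Type*} [InvolutiveInv X]

lemma mem_inter_inv_of_inv_eq {A : Set X} (hA : A ∪ A⁻¹ = univ) {x : X} (hx : x⁻¹ = x) :
    x ∈ A ∩ A⁻¹ := by
  have hxA : x ∈ A ∪ A⁻¹ := hA ▸ mem_univ x
  rw [mem_union, Set.mem_inv, hx] at hxA
  rw [mem_inter_iff, Set.mem_inv, hx]
  tauto

lemma disjoint_inv_union_diff {B₁ B₂ : Set X} (h₁ : Disjoint B₁ B₁⁻¹) (h₂ : Disjoint B₂ B₂⁻¹) :
    Disjoint (B₁ ∪ B₂ \ (B₁ ∪ B₁⁻¹)) (B₁ ∪ B₂ \ (B₁ ∪ B₁⁻¹))⁻¹ := by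
  simp only [Set.disjoint_left, Set.union_inv, inv_inv, mem_union, mem_sdiff, Set.mem_inv] at *
  grind

lemma union_inv_union_diff (B₁ B₂ : Set X) :
    (B₁ ∪ B₂ \ (B₁ ∪ B₁⁻¹)) ∪ (B₁ ∪ B₂ \ (B₁ ∪ B₁⁻¹))⁻¹ = (B₁ ∪ B₁⁻¹) ∪ (B₂ ∪ B₂⁻¹) := by
  ext x
  simp only [Set.union_inv, inv_inv, mem_union, mem_sdiff, Set.mem_inv]
  tauto

variable [TopologicalSpace X]

lemma exists_isOpen_disjoint_inv_union_inv_eq_iUnion {ι : Type*} {K : ι → Set X}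
    (hK : Pairwise (Disjoint on K))
    (hhalf : ∀ i, ∃ B, IsOpen B ∧ Disjoint B B⁻¹ ∧ B ∪ B⁻¹ = K i) :
    ∃ U : Set X, IsOpen U ∧ Disjoint U U⁻¹ ∧ U ∪ U⁻¹ = ⋃ i, K i := by
  choose B hBo hBd hBK using hhalf
  refine ⟨⋃ i, B i, isOpen_iUnion hBo, ?_, ?_⟩
  · simp only [Set.iUnion_inv, Set.disjoint_iUnion_left, Set.disjoint_iUnion_right]
    intro j i
    rcases eq_or_ne i j with rfl | hij
    · exact hBd i
    · exact (hK hij).mono (subset_union_left.trans (hBK i).le)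
        (subset_union_right.trans (hBK j).le)
  · rw [Set.iUnion_inv, ← Set.iUnion_union_distrib]
    exact iUnion_congr hBK

variable [ContinuousInv X]

lemma IsClopen.inv {s : Set X} (hs : IsClopen s) : IsClopen s⁻¹ :=
  hs.preimage continuous_inv

lemma IsCompact.exists_isClopen_disjoint_inv_subset_union_inv [TotallySeparatedSpace X]
    {K : Set X} (hK : IsCompact K) (hfree : ∀ x ∈ K, x⁻¹ ≠ x) :
    ∃ B : Set X, IsClopen B ∧ Disjoint B B⁻¹ ∧ K ⊆ B ∪ B⁻¹ := by
  refine hK.induction_on ⟨∅, isClopen_empty, by simp, empty_subset _⟩ ?_ ?_ ?_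
  · rintro s t hst ⟨B, hB, hBd, htB⟩
    exact ⟨B, hB, hBd, hst.trans htB⟩
  · rintro s t ⟨B₁, hB₁, hB₁d, hsB₁⟩ ⟨B₂, hB₂, hB₂d, htB₂⟩
    refine ⟨B₁ ∪ B₂ \ (B₁ ∪ B₁⁻¹), hB₁.union (hB₂.diff (hB₁.union hB₁.inv)),
      disjoint_inv_union_diff hB₁d hB₂d, ?_⟩
    rw [union_inv_union_diff]
    exact union_subset_union hsB₁ htB₂
  · intro x hx
    obtain ⟨U, hU, hxU, hxU'⟩ := exists_isClopen_of_totally_separated (hfree x hx).symm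
    refine ⟨U \ U⁻¹, mem_nhdsWithin_of_mem_nhds ((hU.diff hU.inv).isOpen.mem_nhds ⟨hxU, hxU'⟩),
      U \ U⁻¹, hU.diff hU.inv, ?_, subset_union_left⟩
    rw [Set.disjoint_left]
    simp only [mem_sdiff, Set.mem_inv, inv_inv]
    tauto

lemma exists_isOpen_disjoint_inv_union_inv_eq [TotallySeparatedSpace X] {K : Set X}
    (hKc : IsCompact K) (hKo : IsOpen K) (hKs : K⁻¹ = K) (hfree : ∀ x ∈ K, x⁻¹ ≠ x) :
    ∃ B : Set X, IsOpen B ∧ Disjoint B B⁻¹ ∧ B ∪ B⁻¹ = K := by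
  obtain ⟨B, hB, hBd, hKB⟩ := hKc.exists_isClopen_disjoint_inv_subset_union_inv hfree
  refine ⟨B ∩ K, hB.isOpen.inter hKo,
    hBd.mono inter_subset_left (inv_subset_inv.2 inter_subset_left), ?_⟩
  rw [Set.inter_inv, hKs, ← union_inter_distrib_right, inter_eq_right.2 hKB]

variable [T2Space X] [CompactSpace X] [TotallyDisconnectedSpace X]

lemma exists_pairwise_disjoint_isClopen_inv_eq_iUnion_eq_compl_singleton {p : X}
    [(𝓝 p).IsCountablyGenerated] (hp : p⁻¹ = p) :
    ∃ K : ℕ → Set X, Pairwise (Disjoint on K) ∧ (∀ n, IsClopen (K n) ∧ (K n)⁻¹ = K n) ∧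
      ⋃ n, K n = {p}ᶜ := by
  obtain ⟨C, hC, hbasis⟩ := (nhds_basis_clopen p).exists_antitone_subbasis
  set V : ℕ → Set X := fun n => (C n ∩ (C n)⁻¹)ᶜ
  have hV : ∀ n, IsClopen (V n) := fun n => ((hC n).2.inter (hC n).2.inv).compl
  have hVs : ∀ n, (V n)⁻¹ = V n := fun n => by
    rw [Set.compl_inv, Set.inter_inv, inv_inv, inter_comm]
  refine ⟨disjointed V, disjoint_disjointed V,
    fun n => ⟨isClopen_disjointed hV n, disjointed_inv hVs n⟩, ?_⟩
  rw [iUnion_disjointed]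
  ext x
  simp only [V, mem_iUnion, mem_compl_iff, mem_inter_iff, Set.mem_inv, mem_singleton_iff]
  constructor
  · rintro ⟨n, hn⟩ rfl
    exact hn ⟨(hC n).1, hp.symm ▸ (hC n).1⟩
  · intro hx
    obtain ⟨n, hn⟩ := hbasis.mem_iff.1 (compl_singleton_mem_nhds (Ne.symm hx))
    exact ⟨n, fun h => hn h.1 rfl⟩

theorem exists_isClosed_inter_inv_eq_singleton_union_inv_eq_univ {p : X}
    [(𝓝 p).IsCountablyGenerated] (hp : p⁻¹ = p) (hfree : ∀ x ≠ p, x⁻¹ ≠ x) :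
    ∃ A : Set X, IsClosed A ∧ A ∩ A⁻¹ = {p} ∧ A ∪ A⁻¹ = univ := by
  obtain ⟨K, hKd, hK, hKp⟩ := exists_pairwise_disjoint_isClopen_inv_eq_iUnion_eq_compl_singleton hp
  obtain ⟨U, hUo, hUd, hUK⟩ := exists_isOpen_disjoint_inv_union_inv_eq_iUnion hKd fun n =>
    exists_isOpen_disjoint_inv_union_inv_eq (hK n).1.isClosed.isCompact (hK n).1.isOpen (hK n).2
      fun x hx => hfree x <| mem_compl_singleton_iff.1 <| hKp ▸ mem_iUnion_of_mem n hx
  refine ⟨Uᶜ, hUo.isClosed_compl, ?_, ?_⟩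
  · rw [Set.compl_inv, ← compl_union, hUK, hKp, compl_compl]
  · rw [Set.compl_inv, ← compl_inter, hUd.inter_eq, compl_empty]

end InvolutiveInv

theorem cantor_group_closed_gameSubset_iff_general {G : Type*} [Group G] [TopologicalSpace G]
    [IsTopologicalGroup G] [CompactSpace G] [TopologicalSpace.MetrizableSpace G]
    [TotallyDisconnectedSpace G] :
    (∃ A : Set G, IsClosed A ∧ A ∩ A⁻¹ = {1} ∧ A ∪ A⁻¹ = Set.univ) ↔
      ¬ ∃ x : G, x ≠ 1 ∧ x * x = 1 := by
  constructor
  · rintro ⟨A, -, hAi, hAu⟩ ⟨x, hx1, hxx⟩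
    exact hx1 <| mem_singleton_iff.1 <|
      hAi ▸ mem_inter_inv_of_inv_eq hAu (inv_eq_of_mul_eq_one_right hxx)
  · intro hno
    refine exists_isClosed_inter_inv_eq_singleton_union_inv_eq_univ inv_one fun x hx1 hxx => ?_
    exact hno ⟨x, hx1, mul_eq_one_iff_eq_inv.2 hxx.symm⟩

/-- A topological group on a Cantor set admits a closed game subset iff it has no
element of order two. -/
theorem cantor_group_closed_gameSubset_iff {G : Type*} [Group G] [TopologicalSpace G]
    [IsTopologicalGroup G] [CompactSpace G] [TopologicalSpace.MetrizableSpace G]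
    [TotallyDisconnectedSpace G]
    (hperf : ∀ x : G, ¬ IsOpen ({x} : Set G)) :
    (∃ A : Set G, IsClosed A ∧ A ∩ A⁻¹ = {1} ∧ A ∪ A⁻¹ = Set.univ) ↔
      ¬ ∃ x : G, x ≠ 1 ∧ x * x = 1 :=
  cantor_group_closed_gameSubset_iff_general
end

section
/- Let R be a topological tournament on a compact Hausdorff space X, and suppose ((x_k, y_k, z_k)) is a net such that each {x_k, y_k, z_k} is a 3-cycle for R. If both (x_k) and (y_k) converge to a point x, then (z_k) also converges to x. -/
open Set Filter Topology

/-- If a net of 3-cycles has two of its vertex nets converging to the same point, the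
third converges to that point as well. -/
theorem threeCycle_net_third_limit {X : Type*} [TopologicalSpace X] [CompactSpace X]
    [T2Space X] (R : Set (X × X)) (hR : IsTournament R) (hclosed : IsClosed R)
    {ι : Type*} (l : Filter ι) [l.NeBot] (x y z : ι → X) (a : X)
    (hcyc : ∀ k : ι, IsThreeCycle R (x k) (y k) (z k))
    (hx : Filter.Tendsto x l (nhds a)) (hy : Filter.Tendsto y l (nhds a)) :
    Filter.Tendsto z l (nhds a) := by
  apply tendsto_nhds_of_unique_mapClusterPt
  intro b hb
  obtain ⟨U, hUl, hUz⟩ := mapClusterPt_iff_ultrafilter.1 hb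
  have hUx : Tendsto x U (𝓝 a) := hx.mono_left hUl
  have hUy : Tendsto y U (𝓝 a) := hy.mono_left hUl
  have hab : (a, b) ∈ R := hclosed.mem_of_tendsto (hUy.prodMk_nhds hUz)
    (Filter.Eventually.of_forall fun k => (hcyc k).2.1.1)
  have hba : (b, a) ∈ R := hclosed.mem_of_tendsto (hUz.prodMk_nhds hUx)
    (Filter.Eventually.of_forall fun k => (hcyc k).2.2.1)
  have : (b, a) ∈ R ∩ {p : X × X | (p.2, p.1) ∈ R} := ⟨hba, hab⟩
  rw [hR.1] at this
  exact this
end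

section
/- Let h : (X₂,R₂) → (X₁,R₁) be a continuous surjective tournament map between compact topological tournaments. If y ∈ X₁ is a cycle point (every neighborhood of y contains a 3-cycle through y), then h⁻¹(y) is a singleton {x} and x is a cycle point of X₂. Consequently, if every point of X₁ is a cycle point, then h is an isomorphism. -/
open Set Filter Topology

/-- A cycle point: every neighborhood contains a 3-cycle through the point. -/
def CyclePoint {X : Type*} [TopologicalSpace X] (R : Set (X × X)) (x : X) : Prop :=
  ∀ U : Set X, IsOpen U → x ∈ U → ∃ a b : X, a ∈ U ∧ b ∈ U ∧ IsThreeCycle R x a b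

/-- Fibers over cycle points are singleton cycle points; if every point downstairs is a
cycle point, the map is an isomorphism. -/
theorem cyclePoint_fiber_singleton {X₂ X₁ : Type*}
    [TopologicalSpace X₂] [CompactSpace X₂] [T2Space X₂]
    [TopologicalSpace X₁] [CompactSpace X₁] [T2Space X₁]
    (R₂ : Set (X₂ × X₂)) (R₁ : Set (X₁ × X₁))
    (hR₂ : IsTournament R₂) (hR₁ : IsTournament R₁)
    (hc₂ : IsClosed R₂) (hc₁ : IsClosed R₁)
    (h : X₂ → X₁) (hcont : Continuous h) (hs : Function.Surjective h)
    (hmap : ∀ a b : X₂, (a, b) ∈ R₂ → (h a, h b) ∈ R₁) :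
    (∀ y : X₁, CyclePoint R₁ y → ∃ x : X₂, h ⁻¹' {y} = {x} ∧ CyclePoint R₂ x) ∧
    ((∀ y : X₁, CyclePoint R₁ y) → Function.Bijective h) := by
  have anti₁ : ∀ a b : X₁, (a, b) ∈ R₁ → (b, a) ∈ R₁ → a = b := by
    intro a b h1 h2
    have : ((a, b) : X₁ × X₁) ∈ R₁ ∩ {p | (p.2, p.1) ∈ R₁} := ⟨h1, h2⟩
    rw [hR₁.1] at this
    exact this
  have anti₂ : ∀ a b : X₂, (a, b) ∈ R₂ → (b, a) ∈ R₂ → a = b := by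
    intro a b h1 h2
    have : ((a, b) : X₂ × X₂) ∈ R₂ ∩ {p | (p.2, p.1) ∈ R₂} := ⟨h1, h2⟩
    rw [hR₂.1] at this
    exact this
  have total₂ : ∀ a b : X₂, (a, b) ∈ R₂ ∨ (b, a) ∈ R₂ := by
    intro a b
    have : ((a, b) : X₂ × X₂) ∈ R₂ ∪ {p | (p.2, p.1) ∈ R₂} := by
      rw [hR₂.2]; trivial
    exact this
  have main : ∀ y : X₁, CyclePoint R₁ y → ∃ x : X₂, h ⁻¹' {y} = {x} ∧ CyclePoint R₂ x := by
    intro y hy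
    set Sp : Set X₂ := h ⁻¹' {w | (y, w) ∈ R₁ ∧ w ≠ y} with hSp_def
    set Sm : Set X₂ := h ⁻¹' {w | (w, y) ∈ R₁ ∧ w ≠ y} with hSm_def
    set A : Set X₂ := closure Sp with hA_def
    set B : Set X₂ := closure Sm with hB_def
    -- every fiber point points to all of A
    have hFA : ∀ x z : X₂, h x = y → z ∈ A → (x, z) ∈ R₂ := by
      intro x z hx hz
      have hcl : IsClosed {z : X₂ | (x, z) ∈ R₂} :=
        hc₂.preimage (continuous_const.prodMk continuous_id)
      have hsub : Sp ⊆ {z : X₂ | (x, z) ∈ R₂} := by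
        intro z hz
        rcases total₂ x z with h1 | h1
        · exact h1
        · exfalso
          have h2 := hmap z x h1
          rw [hx] at h2
          exact hz.2 (anti₁ _ _ h2 hz.1)
      exact closure_minimal hsub hcl hz
    -- all of B points to every fiber point
    have hFB : ∀ x z : X₂, h x = y → z ∈ B → (z, x) ∈ R₂ := by
      intro x z hx hz
      have hcl : IsClosed {z : X₂ | (z, x) ∈ R₂} :=
        hc₂.preimage (continuous_id.prodMk continuous_const)
      have hsub : Sm ⊆ {z : X₂ | (z, x) ∈ R₂} := by
        intro z hz
        rcases total₂ z x with h1 | h1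
        · exact h1
        · exfalso
          have h2 := hmap x z h1
          rw [hx] at h2
          exact hz.2 (anti₁ _ _ hz.1 h2)
      exact closure_minimal hsub hcl hz
    -- pair construction from the cycle point downstairs
    have pair : ∀ U₁ U₂ : Set X₁, IsOpen U₁ → IsOpen U₂ → y ∈ U₁ → y ∈ U₂ →
        ∃ a' b' : X₂, (a', b') ∈ R₂ ∧ a' ∈ Sp ∧ b' ∈ Sm ∧ h a' ∈ U₁ ∧ h b' ∈ U₂ := by
      intro U₁ U₂ hU₁ hU₂ hy₁ hy₂
      obtain ⟨a, b, haU, hbU, hcyc⟩ := hy (U₁ ∩ U₂) (hU₁.inter hU₂) ⟨hy₁, hy₂⟩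
      obtain ⟨a', ha'⟩ := hs a
      obtain ⟨b', hb'⟩ := hs b
      have hab : (a', b') ∈ R₂ := by
        rcases total₂ a' b' with h1 | h1
        · exact h1
        · exfalso
          have h2 := hmap _ _ h1
          rw [ha', hb'] at h2
          exact hcyc.2.1.2 (anti₁ _ _ hcyc.2.1.1 h2)
      refine ⟨a', b', hab, ?_, ?_, ?_, ?_⟩
      · show h a' ∈ {w | (y, w) ∈ R₁ ∧ w ≠ y}
        rw [ha']
        exact ⟨hcyc.1.1, fun hh => hcyc.1.2 hh.symm⟩
      · show h b' ∈ {w | (w, y) ∈ R₁ ∧ w ≠ y}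
        rw [hb']
        exact ⟨hcyc.2.2.1, hcyc.2.2.2⟩
      · rw [ha']; exact haU.1
      · rw [hb']; exact hbU.2
    have gcont : Continuous (fun p : X₂ × X₂ => (h p.1, h p.2)) :=
      (hcont.comp continuous_fst).prodMk (hcont.comp continuous_snd)
    have hTclosed : IsClosed (R₂ ∩ A ×ˢ B) :=
      hc₂.inter (isClosed_closure.prod isClosed_closure)
    -- step 1 : (y,y) is in the image of the compact set T
    have hyyT : (y, y) ∈ (fun p : X₂ × X₂ => (h p.1, h p.2)) '' (R₂ ∩ A ×ˢ B) := by
      have hclosed : IsClosed ((fun p : X₂ × X₂ => (h p.1, h p.2)) '' (R₂ ∩ A ×ˢ B)) :=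
        (hTclosed.isCompact.image gcont).isClosed
      rw [← hclosed.closure_eq]
      rw [mem_closure_iff]
      intro o ho hyo
      obtain ⟨U₁, U₂, hU₁, hU₂, hy₁, hy₂, hsub⟩ := isOpen_prod_iff.mp ho y y hyo
      obtain ⟨a', b', hab, haSp, hbSm, ha₁, hb₂⟩ := pair U₁ U₂ hU₁ hU₂ hy₁ hy₂
      exact ⟨(h a', h b'), hsub ⟨ha₁, hb₂⟩,
        ⟨(a', b'), ⟨hab, subset_closure haSp, subset_closure hbSm⟩, rfl⟩⟩
    obtain ⟨p, ⟨hpR, hpA, hpB⟩, hpeq⟩ := hyyT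
    have hp1 : h p.1 = y := congrArg Prod.fst hpeq
    have hp2 : h p.2 = y := congrArg Prod.snd hpeq
    have hp12 : p.1 = p.2 := anti₂ _ _ hpR (hFA p.2 p.1 hp2 hpA)
    set c : X₂ := p.1 with hc_def
    have hcA : c ∈ A := hpA
    have hcB : c ∈ B := by rw [hp12]; exact hpB
    have hcy : h c = y := hp1
    have hfiber : h ⁻¹' {y} = {c} := by
      ext x
      constructor
      · intro hx
        have hx' : h x = y := hx
        have h1 : (x, c) ∈ R₂ := hFA x c hx' hcA
        have h2 : (c, x) ∈ R₂ := hFB x c hx' hcB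
        exact (anti₂ _ _ h1 h2).symm ▸ rfl
      · intro hx
        have : x = c := hx
        show h x = y
        rw [this, hcy]
    refine ⟨c, hfiber, ?_⟩
    -- c is a cycle point upstairs
    intro V hV hcV
    set T' : Set (X₂ × X₂) := (R₂ ∩ A ×ˢ B) ∩ (V ×ˢ V)ᶜ with hT'_def
    have hT'closed : IsClosed T' := hTclosed.inter (hV.prod hV).isClosed_compl
    have himg : IsClosed ((fun p : X₂ × X₂ => (h p.1, h p.2)) '' T') :=
      (hT'closed.isCompact.image gcont).isClosed
    have hyy_not : (y, y) ∉ (fun p : X₂ × X₂ => (h p.1, h p.2)) '' T' := by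
      rintro ⟨q, ⟨⟨hqR, hqA, hqB⟩, hqV⟩, hqeq⟩
      have hq1 : h q.1 = y := congrArg Prod.fst hqeq
      have hq2 : h q.2 = y := congrArg Prod.snd hqeq
      have hq1c : q.1 = c := by
        have : q.1 ∈ h ⁻¹' {y} := hq1
        rw [hfiber] at this; exact this
      have hq2c : q.2 = c := by
        have : q.2 ∈ h ⁻¹' {y} := hq2
        rw [hfiber] at this; exact this
      exact hqV ⟨hq1c ▸ hcV, hq2c ▸ hcV⟩
    have hopen : IsOpen ((fun p : X₂ × X₂ => (h p.1, h p.2)) '' T')ᶜ := himg.isOpen_compl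
    obtain ⟨U₁, U₂, hU₁, hU₂, hy₁, hy₂, hsub⟩ := isOpen_prod_iff.mp hopen y y hyy_not
    obtain ⟨a', b', hab, haSp, hbSm, ha₁, hb₂⟩ := pair U₁ U₂ hU₁ hU₂ hy₁ hy₂
    have hmemT : (a', b') ∈ R₂ ∩ A ×ˢ B :=
      ⟨hab, subset_closure haSp, subset_closure hbSm⟩
    have hVV : (a', b') ∈ V ×ˢ V := by
      by_contra hcon
      have : ((a', b') : X₂ × X₂) ∈ T' := ⟨hmemT, hcon⟩
      exact hsub ⟨ha₁, hb₂⟩ ⟨(a', b'), this, rfl⟩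
    have hha : h a' ≠ y := haSp.2
    have hhb : h b' ≠ y := hbSm.2
    refine ⟨a', b', hVV.1, hVV.2, ?_, ?_, ?_⟩
    · refine ⟨hFA c a' hcy (subset_closure haSp), ?_⟩
      intro hca
      exact hha (hca ▸ hcy)
    · refine ⟨hab, ?_⟩
      intro habq
      have h1 : (y, h a') ∈ R₁ := haSp.1
      have h2 : (h a', y) ∈ R₁ := by rw [habq]; exact hbSm.1
      exact hha (anti₁ _ _ h1 h2).symm
    · refine ⟨hFB c b' hcy (subset_closure hbSm), ?_⟩
      intro hbc
      exact hhb (hbc ▸ hcy)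
  refine ⟨main, fun hall => ⟨?_, hs⟩⟩
  intro a b hab
  obtain ⟨x, hx, -⟩ := main (h a) (hall (h a))
  have ha : a ∈ h ⁻¹' {h a} := rfl
  have hb : b ∈ h ⁻¹' {h a} := by
    show h b = h a
    exact hab.symm
  rw [hx] at ha hb
  have ha' : a = x := ha
  have hb' : b = x := hb
  rw [ha', hb']
end

section
/- Let R be a topological tournament on a compact Hausdorff space X. If x is a cycle point for R, then the singleton {x} is a Gδ set in X. -/
open Set Filter Topology

/-- In a compact topological tournament, a cycle point is a Gδ point. -/
theorem cyclePoint_isGδ {X : Type*} [TopologicalSpace X] [CompactSpace X] [T2Space X]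
    (R : Set (X × X)) (hR : IsTournament R) (hclosed : IsClosed R)
    (x : X) (hx : CyclePoint R x) :
    IsGδ ({x} : Set X) := by
  classical
  obtain ⟨hanti, htot⟩ := hR
  -- basic tournament facts
  have hdiag : ∀ y : X, (y, y) ∈ R := by
    intro y
    have : ((y, y) : X × X) ∈ R ∩ {p | (p.2, p.1) ∈ R} := by
      rw [hanti]; simp
    exact this.1
  have hasym : ∀ p q : X, (p, q) ∈ R → (q, p) ∈ R → p = q := by
    intro p q h1 h2
    have : ((p, q) : X × X) ∈ R ∩ {p | (p.2, p.1) ∈ R} := ⟨h1, h2⟩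
    rw [hanti] at this
    exact this
  have harc : ∀ y z : X, Arc R y z ↔ (z, y) ∉ R := by
    intro y z
    constructor
    · rintro ⟨h1, h2⟩ h3
      exact h2 (hasym _ _ h1 h3)
    · intro h
      have hzy : ((z, y) : X × X) ∈ R ∪ {p | (p.2, p.1) ∈ R} := by
        rw [htot]; trivial
      rcases hzy with h' | h'
      · exact absurd h' h
      · exact ⟨h', fun he => h (he ▸ hdiag y)⟩
  -- one step of the construction
  have step : ∀ U : Set X, IsOpen U → x ∈ U →
      ∃ p : Set X × X × X, IsOpen p.1 ∧ x ∈ p.1 ∧ closure p.1 ⊆ U ∧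
        p.2.1 ∈ U ∧ p.2.2 ∈ U ∧ (p.2.1, p.2.2) ∈ R ∧
        ∀ y ∈ p.1, Arc R y p.2.1 ∧ Arc R p.2.2 y := by
    intro U hUo hxU
    obtain ⟨a, b, haU, hbU, hxa, hab, hbx⟩ := hx U hUo hxU
    have hWo : IsOpen (U ∩ ({y | (a, y) ∉ R} ∩ {y | (y, b) ∉ R})) := by
      refine hUo.inter (IsOpen.inter ?_ ?_)
      · exact hclosed.isOpen_compl.preimage (continuous_const.prodMk continuous_id)
      · exact hclosed.isOpen_compl.preimage (continuous_id.prodMk continuous_const)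
    have hxW : x ∈ U ∩ ({y | (a, y) ∉ R} ∩ {y | (y, b) ∉ R}) :=
      ⟨hxU, (harc x a).1 hxa, (harc b x).1 hbx⟩
    obtain ⟨t, htm, htc, hts⟩ := exists_mem_nhds_isClosed_subset (hWo.mem_nhds hxW)
    refine ⟨⟨interior t, a, b⟩, isOpen_interior, mem_interior_iff_mem_nhds.2 htm, ?_,
      haU, hbU, hab.1, ?_⟩
    · calc closure (interior t) ⊆ closure t := closure_mono interior_subset
        _ = t := htc.closure_eq
        _ ⊆ U ∩ _ := hts
        _ ⊆ U := inter_subset_left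
    · intro y hy
      have hyW := hts (interior_subset hy)
      exact ⟨(harc y a).2 hyW.2.1, (harc b y).2 hyW.2.2⟩
  have hne : Nonempty X := ⟨x⟩
  choose! f hf using step
  -- the recursive sequence
  set F : ℕ → Set X × X × X :=
    fun n => Nat.rec (⟨Set.univ, x, x⟩ : Set X × X × X) (fun _ p => f p.1) n with hFdef
  set U : ℕ → Set X := fun n => (F n).1 with hU
  set A : ℕ → X := fun n => (F (n + 1)).2.1 with hA
  set B : ℕ → X := fun n => (F (n + 1)).2.2 with hB
  have hFs : ∀ n, F (n + 1) = f (U n) := fun n => rfl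
  have hinv : ∀ n, IsOpen (U n) ∧ x ∈ U n := by
    intro n
    induction n with
    | zero => exact ⟨isOpen_univ, mem_univ x⟩
    | succ n ih =>
      have h := hf (U n) ih.1 ih.2
      exact ⟨h.1, h.2.1⟩
  have hprop : ∀ n, closure (U (n + 1)) ⊆ U n ∧ A n ∈ U n ∧ B n ∈ U n ∧
      (A n, B n) ∈ R ∧ ∀ y ∈ U (n + 1), Arc R y (A n) ∧ Arc R (B n) y := by
    intro n
    have h := hf (U n) (hinv n).1 (hinv n).2
    exact h.2.2
  -- monotonicity
  have hmono : ∀ m n, m ≤ n → U n ⊆ U m := by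
    intro m n hmn
    induction n with
    | zero => rw [Nat.le_zero.1 hmn]
    | succ n ih =>
      rcases Nat.lt_or_ge m (n + 1) with h | h
      · exact (subset_closure.trans (hprop n).1).trans (ih (Nat.lt_succ_iff.1 h))
      · rw [Nat.le_antisymm hmn h]
  -- the intersection is {x}
  have hinter : ({x} : Set X) = ⋂ n, U n := by
    apply Subset.antisymm
    · rintro z rfl
      exact mem_iInter.2 fun n => (hinv n).2
    · intro z hz
      simp only [mem_iInter] at hz
      -- cluster point of the pair sequence
      obtain ⟨p, hp⟩ := exists_clusterPt_of_compactSpace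
        (map (fun n => (A n, B n)) atTop)
      -- any point in all U n relates to p
      have key : ∀ y, (∀ n, y ∈ U n) → (y, p.1) ∈ R ∧ (p.2, y) ∈ R := by
        intro y hy
        have h1 : ∀ n, (y, A n) ∈ R := fun n => (((hprop n).2.2.2.2 y (hy (n + 1))).1).1
        have h2 : ∀ n, (B n, y) ∈ R := fun n => (((hprop n).2.2.2.2 y (hy (n + 1))).2).1
        constructor
        · have hcp : ClusterPt (y, p.1) (map (fun n => (y, A n)) atTop) := by
            have := hp.map (f := fun q : X × X => (y, q.1))
              ((continuous_const.prodMk continuous_fst).continuousAt) tendsto_map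
            simpa [Filter.map_map, Function.comp_def] using this
          have hle : map (fun n => (y, A n)) atTop ≤ 𝓟 R :=
            le_principal_iff.2 (mem_map.2 (Eventually.of_forall h1))
          have : ClusterPt (y, p.1) (𝓟 R) := hcp.mono hle
          have := mem_closure_iff_clusterPt.2 this
          rwa [hclosed.closure_eq] at this
        · have hcp : ClusterPt (p.2, y) (map (fun n => (B n, y)) atTop) := by
            have := hp.map (f := fun q : X × X => (q.2, y))
              ((continuous_snd.prodMk continuous_const).continuousAt) tendsto_map
            simpa [Filter.map_map, Function.comp_def] using this
          have hle : map (fun n => (B n, y)) atTop ≤ 𝓟 R :=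
            le_principal_iff.2 (mem_map.2 (Eventually.of_forall h2))
          have : ClusterPt (p.2, y) (𝓟 R) := hcp.mono hle
          have := mem_closure_iff_clusterPt.2 this
          rwa [hclosed.closure_eq] at this
      -- p.1 and p.2 lie in every U n
      have hp1 : ∀ n, p.1 ∈ U n := by
        intro m
        have hcp : ClusterPt p.1 (map A atTop) := by
          have := hp.map (f := fun q : X × X => q.1) continuous_fst.continuousAt tendsto_map
          simpa [Filter.map_map, Function.comp_def] using this
        have hle : map A atTop ≤ 𝓟 (U (m + 1)) := by
          refine le_principal_iff.2 (mem_map.2 ?_)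
          filter_upwards [eventually_ge_atTop (m + 1)] with n hn
          exact hmono (m + 1) n hn (hprop n).2.1
        have : p.1 ∈ closure (U (m + 1)) :=
          mem_closure_iff_clusterPt.2 (hcp.mono hle)
        exact (hprop m).1 this
      have hp2 : ∀ n, p.2 ∈ U n := by
        intro m
        have hcp : ClusterPt p.2 (map B atTop) := by
          have := hp.map (f := fun q : X × X => q.2) continuous_snd.continuousAt tendsto_map
          simpa [Filter.map_map, Function.comp_def] using this
        have hle : map B atTop ≤ 𝓟 (U (m + 1)) := by
          refine le_principal_iff.2 (mem_map.2 ?_)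
          filter_upwards [eventually_ge_atTop (m + 1)] with n hn
          exact hmono (m + 1) n hn (hprop n).2.2.1
        have : p.2 ∈ closure (U (m + 1)) :=
          mem_closure_iff_clusterPt.2 (hcp.mono hle)
        exact (hprop m).1 this
      -- (p.1, p.2) ∈ R
      have hab : (p.1, p.2) ∈ R := by
        have hle : map (fun n => (A n, B n)) atTop ≤ 𝓟 R :=
          le_principal_iff.2 (mem_map.2 (Eventually.of_forall fun n => (hprop n).2.2.2.1))
        have : ClusterPt p (𝓟 R) := hp.mono hle
        have := mem_closure_iff_clusterPt.2 this
        rwa [hclosed.closure_eq] at this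
      -- antisymmetry gives p.1 = p.2 = x = z
      have hba : (p.2, p.1) ∈ R := (key p.1 hp1).2
      have hpe : p.1 = p.2 := hasym _ _ hab hba
      have hxp : x = p.1 := hasym x p.1 (key x fun n => (hinv n).2).1
        (hpe ▸ (key x fun n => (hinv n).2).2)
      have hzp : z = p.1 := hasym z p.1 (key z hz).1 (hpe ▸ (key z hz).2)
      simp [hzp, hxp]
  -- conclude
  rw [hinter]
  exact ⟨Set.range U, fun t ht => by obtain ⟨n, rfl⟩ := ht; exact (hinv n).1,
    countable_range U, by rw [sInter_range]⟩
end

section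
/- Let h : (X₂,R₂) → (X₁,R₁) be a continuous tournament map between compact metric topological tournaments. For every ε > 0, the set {y ∈ X₁ : diam h⁻¹(y) ≥ ε} is finite. -/
open Set Filter Topology

/-- For a continuous tournament map of compact metric tournaments, only finitely many
fibers have diameter at least ε. -/
theorem finite_large_fibers {X₂ X₁ : Type*} [MetricSpace X₂] [CompactSpace X₂]
    [MetricSpace X₁] [CompactSpace X₁]
    (R₂ : Set (X₂ × X₂)) (R₁ : Set (X₁ × X₁))
    (hR₂ : IsTournament R₂) (hR₁ : IsTournament R₁)
    (hc₂ : IsClosed R₂) (hc₁ : IsClosed R₁)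
    (h : X₂ → X₁) (hcont : Continuous h)
    (hmap : ∀ a b : X₂, (a, b) ∈ R₂ → (h a, h b) ∈ R₁)
    (ε : ℝ) (hε : 0 < ε) :
    {y : X₁ | ε ≤ Metric.diam (h ⁻¹' {y})}.Finite := by
  by_contra hfin
  have hS : {y : X₁ | ε ≤ Metric.diam (h ⁻¹' {y})}.Infinite := hfin
  let e := hS.natEmbedding
  set c : ℕ → X₁ := fun n => (e n : X₁) with hcdef
  have hcinj : Function.Injective c := fun a b hab => e.injective (Subtype.ext hab)
  have hcS : ∀ n, ε ≤ Metric.diam (h ⁻¹' {c n}) := fun n => (e n).2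
  have hex : ∀ n, ∃ p : X₂ × X₂, h p.1 = c n ∧ h p.2 = c n ∧ ε / 2 ≤ dist p.1 p.2 := by
    intro n
    by_contra hco
    push_neg at hco
    have hle : Metric.diam (h ⁻¹' {c n}) ≤ ε / 2 := by
      apply Metric.diam_le_of_forall_dist_le (by linarith)
      intro a ha b hb
      exact (hco (a, b) ha hb).le
    have := hcS n
    linarith
  choose p hp1 hp2 hpd using hex
  set u : ℕ → X₂ := fun n => (p n).1 with hudef
  set v : ℕ → X₂ := fun n => (p n).2 with hvdef
  obtain ⟨L, -, φ, hφ, hLt⟩ :=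
    isCompact_univ.tendsto_subseq (fun n => Set.mem_univ ((u n, v n, c n) : X₂ × X₂ × X₁))
  obtain ⟨x, z, y⟩ := L
  have hxt : Tendsto (fun n => u (φ n)) atTop (𝓝 x) :=
    (continuous_fst.tendsto _).comp hLt
  have hzt : Tendsto (fun n => v (φ n)) atTop (𝓝 z) :=
    ((continuous_fst.comp continuous_snd).tendsto _).comp hLt
  have hyt : Tendsto (fun n => c (φ n)) atTop (𝓝 y) :=
    ((continuous_snd.comp continuous_snd).tendsto _).comp hLt
  have hxy : h x = y := by
    refine tendsto_nhds_unique ?_ hyt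
    have := (hcont.tendsto x).comp hxt
    simpa [Function.comp_def, hudef, hp1] using this
  have hzy : h z = y := by
    refine tendsto_nhds_unique ?_ hyt
    have := (hcont.tendsto z).comp hzt
    simpa [Function.comp_def, hvdef, hp2] using this
  have hdist : ε / 2 ≤ dist x z :=
    ge_of_tendsto (hxt.dist hzt) (Filter.Eventually.of_forall fun n => hpd (φ n))
  have hxz : x ≠ z := by
    intro hxz
    rw [hxz, dist_self] at hdist
    linarith
  -- key fiber relation lemma
  have frel : ∀ (a b : X₁), (a, b) ∈ R₁ → a ≠ b →
      ∀ w₁ w₂ : X₂, h w₁ = a → h w₂ = b → (w₁, w₂) ∈ R₂ := by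
    intro a b hab hne w₁ w₂ hw₁ hw₂
    have htot : (w₁, w₂) ∈ R₂ ∪ {q | (q.2, q.1) ∈ R₂} := by
      rw [hR₂.2]; trivial
    rcases htot with h1 | h2
    · exact h1
    · exfalso
      have hba : (b, a) ∈ R₁ := by
        have := hmap w₂ w₁ h2
        rwa [hw₁, hw₂] at this
      have hmem : (a, b) ∈ R₁ ∩ {q | (q.2, q.1) ∈ R₁} := ⟨hab, hba⟩
      rw [hR₁.1] at hmem
      exact hne hmem
  -- the set of indices hitting y is finite
  have hEfin : {n : ℕ | c (φ n) = y}.Finite := by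
    have : {n : ℕ | c (φ n) = y}.Subsingleton := by
      intro a ha b hb
      exact hφ.injective (hcinj (ha.trans hb.symm))
    exact this.finite
  have hAB : {n : ℕ | (c (φ n), y) ∈ R₁} ∪ {n : ℕ | (y, c (φ n)) ∈ R₁} = Set.univ := by
    apply Set.eq_univ_of_forall
    intro n
    have : (c (φ n), y) ∈ R₁ ∪ {q | (q.2, q.1) ∈ R₁} := by rw [hR₁.2]; trivial
    rcases this with h1 | h2
    · exact Or.inl h1
    · exact Or.inr h2
  have hABinf : ({n : ℕ | (c (φ n), y) ∈ R₁}).Infinite ∨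
      ({n : ℕ | (y, c (φ n)) ∈ R₁}).Infinite := by
    rw [← Set.infinite_union, hAB]
    exact Set.infinite_univ
  have key : (x, z) ∈ R₂ ∧ (z, x) ∈ R₂ := by
    rcases hABinf with hA | hB
    · have hA' : ({n : ℕ | (c (φ n), y) ∈ R₁} \ {n : ℕ | c (φ n) = y}).Infinite :=
        hA.diff hEfin
      set g : ℕ → ℕ := Nat.nth (· ∈ {n : ℕ | (c (φ n), y) ∈ R₁} \ {n : ℕ | c (φ n) = y})
      have hgmono : StrictMono g := Nat.nth_strictMono hA'
      have hgmem : ∀ n, g n ∈ {n : ℕ | (c (φ n), y) ∈ R₁} \ {n : ℕ | c (φ n) = y} :=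
        fun n => Nat.nth_mem_of_infinite hA' n
      constructor
      · refine hc₂.mem_of_tendsto
          ((hxt.comp hgmono.tendsto_atTop).prodMk_nhds tendsto_const_nhds)
          (Filter.Eventually.of_forall fun n => ?_)
        exact frel _ _ (hgmem n).1 (hgmem n).2 _ _ (hp1 _) hzy
      · refine hc₂.mem_of_tendsto
          ((hzt.comp hgmono.tendsto_atTop).prodMk_nhds tendsto_const_nhds)
          (Filter.Eventually.of_forall fun n => ?_)
        exact frel _ _ (hgmem n).1 (hgmem n).2 _ _ (hp2 _) hxy
    · have hB' : ({n : ℕ | (y, c (φ n)) ∈ R₁} \ {n : ℕ | c (φ n) = y}).Infinite :=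
        hB.diff hEfin
      set g : ℕ → ℕ := Nat.nth (· ∈ {n : ℕ | (y, c (φ n)) ∈ R₁} \ {n : ℕ | c (φ n) = y})
      have hgmono : StrictMono g := Nat.nth_strictMono hB'
      have hgmem : ∀ n, g n ∈ {n : ℕ | (y, c (φ n)) ∈ R₁} \ {n : ℕ | c (φ n) = y} :=
        fun n => Nat.nth_mem_of_infinite hB' n
      constructor
      · refine hc₂.mem_of_tendsto
          (tendsto_const_nhds.prodMk_nhds (hzt.comp hgmono.tendsto_atTop))
          (Filter.Eventually.of_forall fun n => ?_)
        exact frel _ _ (hgmem n).1 (fun hh => (hgmem n).2 hh.symm) _ _ hxy (hp2 _)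
      · refine hc₂.mem_of_tendsto
          (tendsto_const_nhds.prodMk_nhds (hxt.comp hgmono.tendsto_atTop))
          (Filter.Eventually.of_forall fun n => ?_)
        exact frel _ _ (hgmem n).1 (fun hh => (hgmem n).2 hh.symm) _ _ hzy (hp1 _)
  have : (x, z) ∈ R₂ ∩ {q | (q.2, q.1) ∈ R₂} := ⟨key.1, key.2⟩
  rw [hR₂.1] at this
  exact hxz this
end

section
/- Let R be a topological tournament on a compact metric space X. The set of points x for which R(x) is clopen (equivalently, x is not left balanced) is countable. -/
open Set Filter Topology

/-- In a compact metric topological tournament, the set of points whose out-set R(x)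
is clopen (the non left balanced points) is countable. -/
theorem countable_clopen_outsets {X : Type*} [MetricSpace X] [CompactSpace X]
    (R : Set (X × X)) (hR : IsTournament R) (hclosed : IsClosed R) :
    {x : X | IsClopen {y : X | (x, y) ∈ R}}.Countable := by
  obtain ⟨hA, hT⟩ := hR
  have hdiag : ∀ x : X, (x, x) ∈ R := fun x => by
    have : (x, x) ∈ R ∩ {p : X × X | (p.2, p.1) ∈ R} := by rw [hA]; rfl
    exact this.1
  -- the map x ↦ R(x) is injective
  have hinj : Function.Injective (fun x : X => {y : X | (x, y) ∈ R}) := by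
    intro x y h
    by_contra hne
    have htot : (x, y) ∈ R ∨ (y, x) ∈ R := by
      have : (x, y) ∈ R ∪ {p : X × X | (p.2, p.1) ∈ R} := by rw [hT]; trivial
      exact this
    rcases htot with h1 | h1
    · have h' : {z : X | (x, z) ∈ R} = {z : X | (y, z) ∈ R} := h
      have hx : x ∈ {z : X | (y, z) ∈ R} := (Set.ext_iff.mp h' x).mp (hdiag x)
      have : (x, y) ∈ R ∩ {p : X × X | (p.2, p.1) ∈ R} := ⟨h1, hx⟩
      rw [hA] at this
      exact hne this
    · have h' : {z : X | (x, z) ∈ R} = {z : X | (y, z) ∈ R} := h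
      have hy : y ∈ {z : X | (x, z) ∈ R} := (Set.ext_iff.mp h' y).mpr (hdiag y)
      have : (y, x) ∈ R ∩ {p : X × X | (p.2, p.1) ∈ R} := ⟨h1, hy⟩
      rw [hA] at this
      exact hne this.symm
  -- clopen sets are countable
  have hcount : {s : Set X | IsClopen s}.Countable := by
    have hchoice : ∀ s : {s : Set X // IsClopen s},
        ∃ t : Finset (TopologicalSpace.countableBasis X), s.1 = (t : Set (TopologicalSpace.countableBasis X)).sUnion := fun s =>
      eq_sUnion_finset_of_isTopologicalBasis_of_isCompact_open _
        (TopologicalSpace.isBasis_countableBasis X) s.1 s.2.1.isCompact s.2.2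
    let f : {s : Set X // IsClopen s} → Finset (TopologicalSpace.countableBasis X) :=
      fun s => (hchoice s).choose
    have hf : Function.Injective f := by
      intro s t h
      simp only [f] at h
      ext1
      rw [(hchoice s).choose_spec, (hchoice t).choose_spec, h]
    have : Countable {s : Set X // IsClopen s} := hf.countable
    exact (countable_coe_iff.mp this)
  exact (hcount.preimage hinj).mono (fun x hx => hx)
end

section
/- Let (X,R) be a compact topological tournament. If X has a nonempty open subset U containing no isolated points, then U contains a right balanced point, i.e. a point x with R(x) equal to the closure of R°(x). -/
open Set Filter Topology

private noncomputable def nextL {X : Type*} [Nonempty X] (P : X → Prop) (r : X → X → Prop)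
    (l : List X) : X :=
  letI := Classical.propDecidable (∃ z, P z ∧ ∀ y ∈ l, r z y)
  if h' : ∃ z, P z ∧ ∀ y ∈ l, r z y then h'.choose else Classical.arbitrary X

private lemma nextL_spec {X : Type*} [Nonempty X] {P : X → Prop} {r : X → X → Prop}
    {l : List X} (h : ∃ z, P z ∧ ∀ y ∈ l, r z y) :
    P (nextL P r l) ∧ ∀ y ∈ l, r (nextL P r l) y := by
  unfold nextL
  rw [dif_pos h]
  exact h.choose_spec

private def iterL {X : Type*} (next : List X → X) : ℕ → List X
  | 0 => []
  | n+1 => next (iterL next n) :: iterL next n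

private lemma mem_iterL {X : Type*} (next : List X → X) :
    ∀ n, ∀ x, x ∈ iterL next n ↔ ∃ m, m < n ∧ x = next (iterL next m) := by
  intro n
  induction n with
  | zero => simp [iterL]
  | succ k ih =>
    intro x
    simp only [iterL, List.mem_cons, ih]
    constructor
    · rintro (rfl | ⟨m, hm, rfl⟩)
      · exact ⟨k, Nat.lt_succ_self k, rfl⟩
      · exact ⟨m, hm.trans (Nat.lt_succ_self k), rfl⟩
    · rintro ⟨m, hm, rfl⟩
      rcases Nat.lt_succ_iff_lt_or_eq.mp hm with h | rfl
      · exact Or.inr ⟨m, h, rfl⟩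
      · exact Or.inl rfl

private lemma exists_chain_seq {X : Type*} [Nonempty X] (P : X → Prop) (r : X → X → Prop)
    (h : ∀ l : List X, (∀ x ∈ l, P x) → l.Pairwise r → ∃ z, P z ∧ ∀ y ∈ l, r z y) :
    ∃ f : ℕ → X, (∀ n, P (f n)) ∧ ∀ m n, m < n → r (f n) (f m) := by
  classical
  set next : List X → X := nextL P r with hnext
  have key : ∀ n, (∀ x ∈ iterL next n, P x) ∧ (iterL next n).Pairwise r := by
    intro n
    induction n with
    | zero => simp [iterL]
    | succ k ih =>
      have hex : ∃ z, P z ∧ ∀ y ∈ iterL next k, r z y := h _ ih.1 ih.2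
      have hspec := nextL_spec (l := iterL next k) hex
      refine ⟨?_, ?_⟩
      · intro x hx
        simp only [iterL, List.mem_cons] at hx
        rcases hx with rfl | hx'
        · exact hspec.1
        · exact ih.1 x hx'
      · simp only [iterL, List.pairwise_cons]
        exact ⟨hspec.2, ih.2⟩
  refine ⟨fun n => next (iterL next n), ?_, ?_⟩
  · intro n
    exact (key (n+1)).1 _ (by simp only [iterL]; exact List.mem_cons_self)
  · intro m n hmn
    have hpair := (key (n+1)).2
    simp only [iterL, List.pairwise_cons] at hpair
    exact hpair.1 _ ((mem_iterL next n _).mpr ⟨m, hmn, rfl⟩)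

/-- If a compact topological tournament has a nonempty open set with no isolated
points, then that set contains a right balanced point. -/
theorem exists_rightBalanced_point {X : Type*} [TopologicalSpace X] [CompactSpace X]
    [T2Space X] (R : Set (X × X)) (hR : IsTournament R) (hclosed : IsClosed R)
    (U : Set X) (hU : IsOpen U) (hne : U.Nonempty)
    (hiso : ∀ x ∈ U, ¬ IsOpen ({x} : Set X)) :
    ∃ x ∈ U, closure {y : X | Arc R x y} = {y : X | (x, y) ∈ R} := by
  classical
  by_contra hcon
  push_neg at hcon
  have hXne : Nonempty X := ⟨hne.choose⟩
  have hdiag : ∀ x : X, (x, x) ∈ R := by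
    intro x
    have hx : ((x, x) : X × X) ∈ (R ∪ {p : X × X | (p.2, p.1) ∈ R}) := by
      rw [hR.2]; trivial
    rcases hx with h | h
    · exact h
    · exact h
  -- choose separating neighborhoods witnessing failure of right balance
  have hVex : ∀ x : X, ∃ V : Set X, x ∈ U → IsOpen V ∧ x ∈ V ∧ ∀ y ∈ V, (x, y) ∈ R → y = x := by
    intro x
    by_cases hx : x ∈ U
    · have hA : IsClosed {y : X | (x, y) ∈ R} :=
        hclosed.preimage (Continuous.prodMk_right x)
      have hsub : closure {y : X | Arc R x y} ⊆ {y : X | (x, y) ∈ R} := by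
        apply closure_minimal ?_ hA
        intro y hy; exact hy.1
      have hxnot : x ∉ closure {y : X | Arc R x y} := by
        intro hxmem
        apply hcon x hx
        apply Subset.antisymm hsub
        intro y hy
        by_cases hxy : x = y
        · subst hxy; exact hxmem
        · exact subset_closure ⟨hy, hxy⟩
      refine ⟨(closure {y : X | Arc R x y})ᶜ,
        fun _ => ⟨isClosed_closure.isOpen_compl, hxnot, ?_⟩⟩
      intro y hy hyR
      by_contra hne'
      exact hy (subset_closure ⟨hyR, fun e => hne' e.symm⟩)
    · exact ⟨univ, fun h => absurd h hx⟩
  choose V hV using hVex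
  -- a regular-closed shrink of U
  obtain ⟨p, hp⟩ := hne
  obtain ⟨C, hCnhds, hCclosed, hCU⟩ := exists_mem_nhds_isClosed_subset (hU.mem_nhds hp)
  set U' := interior C with hU'def
  have hU'o : IsOpen U' := isOpen_interior
  have hpU' : p ∈ U' := mem_interior_iff_mem_nhds.mpr hCnhds
  have hU'U : U' ⊆ U := interior_subset.trans hCU
  have hclU : closure U' ⊆ U := (closure_minimal interior_subset hCclosed).trans hCU
  -- no isolated points: open sets in U avoid finite sets
  have hfin : ∀ (W F : Set X), IsOpen W → W ⊆ U → W.Nonempty → F.Finite →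
      ∃ z ∈ W, z ∉ F := by
    intro W F hWo hWU hWne hF
    by_contra hcontra
    push_neg at hcontra
    have hWF : W ⊆ F := hcontra
    have hWfin : W.Finite := hF.subset hWF
    obtain ⟨w, hw⟩ := hWne
    have hsing : ({w} : Set X) = W \ (W \ {w}) := by
      ext z
      simp only [mem_singleton_iff, mem_diff, not_and, not_not]
      constructor
      · rintro rfl; exact ⟨hw, fun _ => rfl⟩
      · rintro ⟨hz, h2⟩; exact h2 hz
    have hopen : IsOpen ({w} : Set X) := by
      rw [hsing]
      exact hWo.sdiff (hWfin.subset diff_subset).isClosed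
    exact hiso w (hWU hw) hopen
  -- build the chain sequence
  have hstep : ∀ l : List X, (∀ x ∈ l, x ∈ U') →
      l.Pairwise (fun z y => z ∈ V y ∧ z ≠ y) →
      ∃ z, z ∈ U' ∧ ∀ y ∈ l, z ∈ V y ∧ z ≠ y := by
    intro l hlU hlp
    have hVopen : ∀ y ∈ l, IsOpen (V y) := fun y hy => (hV y (hU'U (hlU y hy))).1
    set W := U' ∩ ⋂ y ∈ l.toFinset, V y with hWdef
    have hWo : IsOpen W :=
      hU'o.inter (isOpen_biInter_finset fun y hy => hVopen y (List.mem_toFinset.mp hy))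
    have hWne : W.Nonempty := by
      cases l with
      | nil => exact ⟨p, hpU', by simp⟩
      | cons a t =>
        have haU' : a ∈ U' := hlU a List.mem_cons_self
        refine ⟨a, haU', ?_⟩
        simp only [mem_iInter, List.mem_toFinset]
        intro y hy
        rcases List.mem_cons.mp hy with rfl | hyt
        · exact (hV y (hU'U haU')).2.1
        · exact ((List.pairwise_cons.mp hlp).1 y hyt).1
    obtain ⟨z, hzW, hzF⟩ := hfin W {y | y ∈ l} hWo (fun w hw => hU'U hw.1) hWne
      (List.finite_toSet l)
    refine ⟨z, hzW.1, fun y hy => ⟨?_, fun e => hzF (by rw [e]; exact hy)⟩⟩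
    have := hzW.2
    simp only [mem_iInter, List.mem_toFinset] at this
    exact this y hy
  obtain ⟨f, hfU', hfr⟩ := exists_chain_seq (fun x => x ∈ U')
    (fun z y => z ∈ V y ∧ z ≠ y) hstep
  -- a cluster point of the sequence
  obtain ⟨x, -, hx⟩ := isCompact_univ.exists_clusterPt (f := map f atTop)
    (le_principal_iff.mpr univ_mem)
  have hmemU' : map f atTop ≤ 𝓟 U' :=
    le_principal_iff.mpr (mem_map.mpr (Eventually.of_forall hfU'))
  have hxU : x ∈ U := hclU (mem_closure_iff_clusterPt.mpr (hx.mono hmemU'))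
  -- x beats every f n, i.e. (x, f n) ∈ R
  have hxR : ∀ n, (x, f n) ∈ R := by
    intro n
    have hcl : IsClosed {z : X | (z, f n) ∈ R} :=
      hclosed.preimage (continuous_id.prodMk continuous_const)
    have hev : ∀ᶠ m in atTop, f m ∈ {z : X | (z, f n) ∈ R} := by
      filter_upwards [eventually_gt_atTop n] with m hm
      have h1 := hfr n m hm
      have h2 : (f n, f m) ∉ R := by
        intro hR'
        exact h1.2 ((hV (f n) (hU'U (hfU' n))).2.2 (f m) h1.1 hR')
      have htot : ((f m, f n) : X × X) ∈ R ∪ {p : X × X | (p.2, p.1) ∈ R} := by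
        rw [hR.2]; trivial
      rcases htot with h | h
      · exact h
      · exact absurd h h2
    have hle : map f atTop ≤ 𝓟 {z : X | (z, f n) ∈ R} :=
      le_principal_iff.mpr (mem_map.mpr hev)
    have : x ∈ closure {z : X | (z, f n) ∈ R} :=
      mem_closure_iff_clusterPt.mpr (hx.mono hle)
    rwa [hcl.closure_eq] at this
  -- contradiction with the isolating neighborhood of x
  have hVx := hV x hxU
  have hnb : V x ∈ 𝓝 x := hVx.1.mem_nhds hVx.2.1
  have hfreq : ∃ᶠ n in atTop, f n ∈ V x := by
    have : (𝓝 x ⊓ map f atTop).NeBot := hx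
    rw [Filter.frequently_map.symm]
    exact Filter.inf_neBot_iff_frequently_left.mp this hnb
  obtain ⟨n1, hn1⟩ := hfreq.exists
  obtain ⟨n2, hn2, hn2'⟩ := (hfreq.and_eventually (eventually_gt_atTop n1)).exists
  have e1 : f n1 = x := hVx.2.2 (f n1) hn1 (hxR n1)
  have e2 : f n2 = x := hVx.2.2 (f n2) hn2 (hxR n2)
  exact (hfr n1 n2 hn2').2 (e2.trans e1.symm)
end
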